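/- Let (X,d) be a metric space and A a nonempty subset of X. Then A is Bourbaki quasi-precompact in X if and only if every sequence in A has a subsequence which is Bourbaki quasi-Cauchy in X. -/

import Mathlib

open Filter Metric Set

/-- `y` lies in the ε-chainable component of `x`: they are joined by an ε-chain. -/
def ChainConn {α : Type*} [MetricSpace α] (ε : ℝ) (x y : α) : Prop :=
  ∃ (n : ℕ) (p : ℕ → α), p 0 = x ∧ p n = y ∧ ∀ i < n, dist (p i) (p (i+1)) < ε

/-- A sequence is Bourbaki quasi-Cauchy if for each ε > 0 it is eventually in one
ε-chainable component. -/
def BourbakiQuasiCauchy {α : Type*} [MetricSpace α] (u : ℕ → α) : Prop :=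
  ∀ ε > (0:ℝ), ∃ (p : α) (n₀ : ℕ), ∀ n ≥ n₀, ChainConn ε p (u n)

/-- A set `A` is Bourbaki quasi-precompact in the ambient space: for every ε > 0,
`A` is covered by finitely many ε-chainable components. -/
def BourbakiQuasiPrecompactIn {α : Type*} [MetricSpace α] (A : Set α) : Prop :=
  ∀ ε > (0:ℝ), ∃ s : Finset α, ∀ a ∈ A, ∃ p ∈ s, ChainConn ε p a

lemma chainConn_mono {α : Type*} [MetricSpace α] {ε ε' : ℝ} (h : ε ≤ ε') {x y : α}
    (hc : ChainConn ε x y) : ChainConn ε' x y := by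
  obtain ⟨n, p, h0, hn, hd⟩ := hc
  exact ⟨n, p, h0, hn, fun i hi => lt_of_lt_of_le (hd i hi) h⟩

lemma chainConn_symm {α : Type*} [MetricSpace α] {ε : ℝ} {x y : α}
    (hc : ChainConn ε x y) : ChainConn ε y x := by
  obtain ⟨n, p, h0, hn, hd⟩ := hc
  refine ⟨n, fun i => p (n - i), by simpa using hn, by simpa using h0, ?_⟩
  intro i hi
  have h1 : n - i = (n - (i+1)) + 1 := by omega
  show dist (p (n - i)) (p (n - (i+1))) < ε
  rw [h1, dist_comm]
  exact hd (n - (i+1)) (by omega)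

lemma chainConn_trans {α : Type*} [MetricSpace α] {ε : ℝ} {x y z : α}
    (h1 : ChainConn ε x y) (h2 : ChainConn ε y z) : ChainConn ε x z := by
  obtain ⟨n, p, hp0, hpn, hpd⟩ := h1
  obtain ⟨m, q, hq0, hqm, hqd⟩ := h2
  refine ⟨n + m, fun i => if i < n then p i else q (i - n), ?_, ?_, ?_⟩
  · by_cases h : 0 < n
    · simp only [if_pos h]; exact hp0
    · have hn0 : n = 0 := by omega
      simp only [if_neg h]
      subst hn0
      rw [hq0, ← hpn]; exact hp0
  · simp [hqm]
  · intro i hi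
    by_cases h : i + 1 < n
    · simp only [if_pos h, if_pos (by omega : i < n)]
      exact hpd i (by omega)
    · by_cases h' : i < n
      · have : i + 1 = n := by omega
        simp only [if_pos h', if_neg h]
        rw [this, Nat.sub_self, hq0, ← hpn, ← this]
        exact hpd i h'
      · simp only [if_neg h, if_neg h']
        have : i + 1 - n = (i - n) + 1 := by omega
        rw [this]
        exact hqd (i - n) (by omega)

theorem stmt1 {X : Type*} [MetricSpace X] (A : Set X) (hA : A.Nonempty) :
    BourbakiQuasiPrecompactIn A ↔
      ∀ u : ℕ → X, (∀ n, u n ∈ A) →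
        ∃ φ : ℕ → ℕ, StrictMono φ ∧ BourbakiQuasiCauchy (u ∘ φ) := by
  classical
  constructor
  · -- forward direction
    intro h u hu
    -- key pigeonhole step
    have key : ∀ (ε : ℝ), 0 < ε → ∀ S : Set ℕ, S.Infinite →
        ∃ p : X, (S ∩ {n | ChainConn ε p (u n)}).Infinite := by
      intro ε hε S hS
      obtain ⟨s, hs⟩ := h ε hε
      by_contra hc
      push_neg at hc
      have hsub : S ⊆ ⋃ p ∈ (s : Finset X), (S ∩ {n | ChainConn ε p (u n)}) := by
        intro n hn
        obtain ⟨p, hp, hcc⟩ := hs (u n) (hu n)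
        exact Set.mem_biUnion hp ⟨hn, hcc⟩
      exact hS ((Set.Finite.biUnion s.finite_toSet
        (fun p _ => (hc p))).subset hsub)
    set εk : ℕ → ℝ := fun k => 1 / ((k : ℝ) + 1) with hεk
    have hεkpos : ∀ k, 0 < εk k := by
      intro k; positivity
    -- choice functions
    let c : ∀ (k : ℕ), {S : Set ℕ // S.Infinite} → X :=
      fun k S => Classical.choose (key (εk k) (hεkpos k) S.1 S.2)
    let step : ∀ (k : ℕ), {S : Set ℕ // S.Infinite} → {S : Set ℕ // S.Infinite} :=
      fun k S => ⟨S.1 ∩ {n | ChainConn (εk k) (c k S) (u n)},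
        Classical.choose_spec (key (εk k) (hεkpos k) S.1 S.2)⟩
    let Sseq : ℕ → {S : Set ℕ // S.Infinite} :=
      fun k => Nat.rec ⟨Set.univ, Set.infinite_univ⟩ step k
    have hSsucc : ∀ k, Sseq (k+1) = step k (Sseq k) := fun k => rfl
    have hSsub : ∀ k, (Sseq (k+1)).1 ⊆ (Sseq k).1 := by
      intro k
      rw [hSsucc k]
      exact Set.inter_subset_left
    have hSanti : ∀ k j, k ≤ j → (Sseq j).1 ⊆ (Sseq k).1 := by
      intro k j hkj
      induction j with
      | zero => simp_all
      | succ j ih =>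
        rcases Nat.lt_or_ge k (j+1) with h' | h'
        · exact (hSsub j).trans (ih (by omega))
        · have : k = j + 1 := by omega
          subst this; exact fun _ h => h
    have hSchain : ∀ k, ∀ n ∈ (Sseq (k+1)).1, ChainConn (εk k) (c k (Sseq k)) (u n) := by
      intro k n hn
      rw [hSsucc k] at hn
      exact hn.2
    -- diagonal subsequence
    have hgt : ∀ (k m : ℕ), ∃ n ∈ (Sseq k).1, m < n := by
      intro k m
      exact (Sseq k).2.exists_gt m
    let nxt : ℕ → ℕ → ℕ := fun k m => Classical.choose (hgt (k+1) m)
    let φ : ℕ → ℕ := fun k => Nat.rec 0 nxt k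
    have hφsucc : ∀ k, φ (k+1) = nxt k (φ k) := fun k => rfl
    have hφmem : ∀ k, φ k ∈ (Sseq k).1 := by
      intro k
      cases k with
      | zero => exact Set.mem_univ 0
      | succ k => exact (Classical.choose_spec (hgt (k+1) (φ k))).1
    have hφmono : StrictMono φ := by
      apply strictMono_nat_of_lt_succ
      intro k
      exact (Classical.choose_spec (hgt (k+1) (φ k))).2
    refine ⟨φ, hφmono, ?_⟩
    intro ε hε
    obtain ⟨k, hk⟩ := exists_nat_one_div_lt hε
    refine ⟨c k (Sseq k), k + 1, ?_⟩
    intro n hn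
    have hmem : φ n ∈ (Sseq (k+1)).1 := hSanti (k+1) n hn (hφmem n)
    exact chainConn_mono hk.le (hSchain k (φ n) hmem)
  · -- reverse direction
    intro h
    intro ε hε
    by_contra hc
    push_neg at hc
    choose f hfA hf using hc
    let F : ℕ → Finset X := fun n => Nat.rec ∅ (fun n s => insert (f s) s) n
    let v : ℕ → X := fun n => f (F n)
    have hFsucc : ∀ n, F (n+1) = insert (v n) (F n) := fun n => rfl
    have hFmono : ∀ m n, m ≤ n → F m ⊆ F n := by
      intro m n hmn
      induction n with
      | zero => simp_all
      | succ n ih =>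
        rcases Nat.lt_or_ge m (n+1) with h' | h'
        · refine (ih (by omega)).trans ?_
          rw [hFsucc n]; exact Finset.subset_insert _ _
        · have : m = n + 1 := by omega
          subst this; exact fun _ h => h
    have hvmem : ∀ m n, m < n → v m ∈ F n := by
      intro m n hmn
      apply hFmono (m+1) n hmn
      rw [hFsucc m]; exact Finset.mem_insert_self _ _
    have hsep : ∀ m n, m < n → ¬ ChainConn ε (v m) (v n) := by
      intro m n hmn
      exact hf (F n) (v m) (hvmem m n hmn)
    obtain ⟨φ, hφ, hqc⟩ := h v (fun n => hfA (F n))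
    obtain ⟨p, n₀, hp⟩ := hqc ε hε
    have h1 : ChainConn ε p (v (φ n₀)) := hp n₀ le_rfl
    have h2 : ChainConn ε p (v (φ (n₀+1))) := hp (n₀+1) (by omega)
    exact hsep (φ n₀) (φ (n₀+1)) (hφ (by omega))
      (chainConn_trans (chainConn_symm h1) h2)
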